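/- Let 2 < p < ∞ with conjugate q, let f'' : ℝ → ℝ be bounded and Lipschitz (with constant ‖f⁽³⁾‖_∞), ω ∈ L^p(ℝᵈ) ∩ L^q(ℝᵈ), and let (uₙ) ⊂ Lᵖ(ℝᵈ) converge to u in Lᵖ. Then the bilinear operators Bₙ(h,v) = μ ω∗[(f''(uₙ) − f''(u)) h v] converge to zero in the norm of bounded bilinear maps Lᵖ(ℝᵈ)² → Lᵖ(ℝᵈ): specifically, if ‖uₙ − u‖_p ≤ ε then ‖Bₙ‖ ≤ μ(‖f⁽³⁾‖_∞‖ω‖_q + 2‖f''‖_∞‖ω‖_p) max(√ε, (√ε)^{p−2}). -/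

import Mathlib

open Real Filter MeasureTheory
open scoped Convolution ENNReal NNReal

/-!
With `E = {|u' - u| > √ε}`, the Lipschitz bound gives `|f''(u') - f''(u)| ≤ K √ε` off `E`, while
on `E` only the bound `2 C₂` is available; but Chebyshev gives `|E| ≤ √ε ^ p`. So the integrand is
dominated by `K √ε |h v| + 2 C₂ 1_E |h v|`. Young's convolution inequality bounds the convolution of
`ω` with the first piece by `‖ω‖_q ‖h v‖_{p/2}` and with the second by `‖ω‖_p ‖1_E h v‖_1`, and
Hölder gives `‖h v‖_{p/2} ≤ ‖h‖_p ‖v‖_p` and `‖1_E h v‖_1 ≤ |E| ^ (1 - 2/p) ‖h v‖_{p/2}`.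

Young's inequality is proved for the lower convolution `‖ω‖ₑ ⋆ₗ ‖g‖ₑ`, which dominates
`‖ω ⋆ g‖ₑ` pointwise and needs no integrability, by a three-factor Hölder inequality and Tonelli.
-/

section Holder

variable {α : Type*} [MeasurableSpace α] {ν : Measure α}

theorem lintegral_mul_rpow_le_of_young_exponents {f g : α → ℝ≥0∞} (hf : AEMeasurable f ν)
    (hg : AEMeasurable g ν) {p q r : ℝ} (hp : 0 < p) (hq : 1 ≤ q) (hr : 1 ≤ r)
    (hpqr : q⁻¹ + r⁻¹ = 1 + p⁻¹) :
    (∫⁻ t, f t * g t ∂ν) ^ p ≤ (∫⁻ t, f t ^ q * g t ^ r ∂ν) *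
      (∫⁻ t, f t ^ q ∂ν) ^ (p / q - 1) * (∫⁻ t, g t ^ r ∂ν) ^ (p / r - 1) := by
  have hq0 : 0 < q := by linarith
  have hr0 : 0 < r := by linarith
  have hb : 0 ≤ q⁻¹ - p⁻¹ := by linarith [inv_le_one_of_one_le₀ hr]
  have hc : 0 ≤ r⁻¹ - p⁻¹ := by linarith [inv_le_one_of_one_le₀ hq]
  have hsplit : ∀ t, f t * g t = (f t ^ q * g t ^ r) ^ p⁻¹ * (f t ^ q) ^ (q⁻¹ - p⁻¹) *
      (g t ^ r) ^ (r⁻¹ - p⁻¹) := fun t => by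
    have hf1 : q * p⁻¹ + q * (q⁻¹ - p⁻¹) = 1 := by field_simp; ring
    have hg1 : r * p⁻¹ + r * (r⁻¹ - p⁻¹) = 1 := by field_simp; ring
    simp only [ENNReal.mul_rpow_of_nonneg _ _ (inv_nonneg.2 hp.le), ← ENNReal.rpow_mul]
    rw [← ENNReal.rpow_one (f t * g t), ENNReal.mul_rpow_of_nonneg _ _ zero_le_one]
    nth_rw 1 [← hf1]
    nth_rw 1 [← hg1]
    rw [ENNReal.rpow_add_of_nonneg _ _ (by positivity) (mul_nonneg hq0.le hb),
      ENNReal.rpow_add_of_nonneg _ _ (by positivity) (mul_nonneg hr0.le hc)]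
    ring
  have holder := ENNReal.lintegral_prod_norm_pow_le (μ := ν) Finset.univ
    (f := ![fun t => f t ^ q * g t ^ r, fun t => f t ^ q, fun t => g t ^ r])
    (fun i _ => by fin_cases i <;> simp <;> fun_prop) (p := ![p⁻¹, q⁻¹ - p⁻¹, r⁻¹ - p⁻¹])
    (by simp [Fin.sum_univ_three]; linarith) (fun i _ => by fin_cases i <;> simp [hp.le, hb, hc])
  simp only [Fin.prod_univ_three, Matrix.cons_val] at holder
  calc (∫⁻ t, f t * g t ∂ν) ^ p
      ≤ ((∫⁻ t, f t ^ q * g t ^ r ∂ν) ^ p⁻¹ * (∫⁻ t, f t ^ q ∂ν) ^ (q⁻¹ - p⁻¹) *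
          (∫⁻ t, g t ^ r ∂ν) ^ (r⁻¹ - p⁻¹)) ^ p := by
        gcongr
        simpa only [hsplit] using holder
    _ = _ := by
        simp only [ENNReal.mul_rpow_of_nonneg _ _ hp.le, ← ENNReal.rpow_mul]
        congr 2 <;> [simp [hp.ne']; field_simp; field_simp]

theorem eLpNorm_mul_half_le {f g : α → ℝ} (hf : AEStronglyMeasurable f ν)
    (hg : AEStronglyMeasurable g ν) {p : ℝ} (hp : 0 < p) :
    eLpNorm (f * g) (.ofReal (p / 2)) ν ≤ eLpNorm f (.ofReal p) ν * eLpNorm g (.ofReal p) ν := by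
  have : (ENNReal.ofReal p).HolderTriple (.ofReal p) (.ofReal (p / 2)) :=
    Real.HolderTriple.ennrealOfReal ⟨by rw [inv_div]; ring, hp, hp⟩
  simpa only [smul_eq_mul] using eLpNorm_smul_le_mul_eLpNorm (r := .ofReal (p / 2)) hg hf

theorem eLpNorm_indicator_const_mul_le {s : Set α} (hs : NullMeasurableSet s ν) (c : ℝ)
    {f : α → ℝ} (hf : AEStronglyMeasurable f ν) {p q r : ℝ≥0∞} [p.HolderTriple q r] :
    eLpNorm (s.indicator (fun _ => c) * f) r ν ≤ ‖c‖ₑ * ν s ^ (1 / p.toReal) * eLpNorm f q ν := by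
  refine (eLpNorm_smul_le_mul_eLpNorm (p := p) (q := q) (r := r) hf
    ((aestronglyMeasurable_const (b := c)).indicator₀ hs)).trans ?_
  gcongr
  exact eLpNorm_indicator_const_le c p

theorem measure_sqrt_lt_abs_le {f : α → ℝ} (hf : AEStronglyMeasurable f ν) {p ε : ℝ} (hp : 0 < p)
    (hε : 0 < ε) (hfε : eLpNorm f (.ofReal p) ν ≤ .ofReal ε) :
    ν {x | √ε < |f x|} ≤ .ofReal √ε ^ p := by
  have hδ : ENNReal.ofReal √ε ≠ 0 := by simpa using hε
  have hε_sq : ENNReal.ofReal ε = .ofReal √ε * .ofReal √ε := by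
    rw [← ENNReal.ofReal_mul (Real.sqrt_nonneg _), Real.mul_self_sqrt hε.le]
  have chebyshev := meas_ge_le_mul_pow_eLpNorm_enorm ν (ENNReal.ofReal_pos.2 hp).ne'
    ENNReal.ofReal_ne_top hf hδ (by simp)
  rw [ENNReal.toReal_ofReal hp.le] at chebyshev
  calc ν {x | √ε < |f x|} ≤ ν {x | .ofReal √ε ≤ ‖f x‖ₑ} := by
        refine measure_mono fun x hx => ?_
        simp only [Set.mem_ofPred_eq, Real.enorm_eq_ofReal_abs] at hx ⊢
        exact ENNReal.ofReal_le_ofReal hx.le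
    _ ≤ (ENNReal.ofReal √ε)⁻¹ ^ p * ENNReal.ofReal ε ^ p := by
        refine chebyshev.trans ?_
        gcongr
    _ = .ofReal √ε ^ p := by
        rw [← ENNReal.mul_rpow_of_nonneg _ _ hp.le, hε_sq, ← mul_assoc,
          ENNReal.inv_mul_cancel hδ ENNReal.ofReal_ne_top, one_mul]

theorem eLpNorm_indicator_const_mul_mul_le {s : Set α} (hs : NullMeasurableSet s ν) (c : ℝ)
    {f g : α → ℝ} (hf : AEStronglyMeasurable f ν) (hg : AEStronglyMeasurable g ν) {p δ : ℝ}
    (hp : 2 < p) (hδ : 0 ≤ δ) (hs_le : ν s ≤ .ofReal δ ^ p) :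
    eLpNorm (s.indicator (fun _ => c) * (f * g)) 1 ν ≤
      ‖c‖ₑ * .ofReal (δ ^ (p - 2)) * (eLpNorm f (.ofReal p) ν * eLpNorm g (.ofReal p) ν) := by
  have hp0 : 0 < p := by linarith
  have : (ENNReal.ofReal (p / (p - 2))).HolderTriple (.ofReal (p / 2)) 1 := by
    simpa using Real.HolderTriple.ennrealOfReal (r := 1)
      ⟨by field_simp; ring, div_pos hp0 (by linarith), by positivity⟩
  have hs_pow : ν s ^ (1 / (ENNReal.ofReal (p / (p - 2))).toReal) ≤ .ofReal (δ ^ (p - 2)) := by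
    rw [ENNReal.toReal_ofReal (div_pos hp0 (by linarith)).le, ← ENNReal.ofReal_rpow_of_nonneg hδ
      (by linarith)]
    calc ν s ^ (1 / (p / (p - 2))) ≤ (ENNReal.ofReal δ ^ p) ^ (1 / (p / (p - 2))) := by gcongr
      _ = ENNReal.ofReal δ ^ (p - 2) := by rw [← ENNReal.rpow_mul]; congr 1; field_simp
  calc eLpNorm (s.indicator (fun _ => c) * (f * g)) 1 ν
      ≤ ‖c‖ₑ * ν s ^ (1 / (ENNReal.ofReal (p / (p - 2))).toReal) *
          eLpNorm (f * g) (.ofReal (p / 2)) ν :=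
        eLpNorm_indicator_const_mul_le hs c (hf.mul hg)
    _ ≤ _ := by gcongr; exact eLpNorm_mul_half_le hf hg hp0

end Holder

theorem LipschitzWith.enorm_comp_sub_mul_le {X : Type*} {f : ℝ → ℝ} {K : ℝ≥0}
    (hf : LipschitzWith K f) {C : ℝ} (hC : ∀ s, |f s| ≤ C) {δ : ℝ} (hδ : 0 ≤ δ)
    (u u' w : X → ℝ) (y : X) :
    ‖(f (u' y) - f (u y)) * w y‖ₑ ≤ ‖(((K : ℝ) * δ) • w) y‖ₑ +
      ‖({y | δ < |(u' - u) y|}.indicator (fun _ => 2 * C) * w) y‖ₑ := by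
  have hC0 : 0 ≤ C := (abs_nonneg _).trans (hC 0)
  have hdiff : |f (u' y) - f (u y)| ≤
      K * δ + |{y | δ < |(u' - u) y|}.indicator (fun _ => 2 * C) y| := by
    by_cases hy : δ < |u' y - u y|
    · rw [Set.indicator_of_mem (by exact hy), abs_of_nonneg (by linarith : (0 : ℝ) ≤ 2 * C)]
      linarith [abs_sub (f (u' y)) (f (u y)), hC (u' y), hC (u y), mul_nonneg K.coe_nonneg hδ]
    · rw [Set.indicator_of_notMem (by exact hy), abs_zero, add_zero]
      calc |f (u' y) - f (u y)| ≤ K * |u' y - u y| := by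
            simpa only [Real.dist_eq] using hf.dist_le_mul (u' y) (u y)
        _ ≤ K * δ := by gcongr; exact not_lt.1 hy
  simp only [Real.enorm_eq_ofReal_abs, Pi.smul_apply, Pi.mul_apply, smul_eq_mul, abs_mul,
    abs_of_nonneg K.coe_nonneg, abs_of_nonneg hδ]
  rw [← ENNReal.ofReal_add (by positivity) (by positivity), ← add_mul]
  exact ENNReal.ofReal_le_ofReal (mul_le_mul_of_nonneg_right hdiff (abs_nonneg _))

section Young

variable {G : Type*} [MeasurableSpace G] [AddCommGroup G] {μ : Measure G}

theorem enorm_convolution_le_lconvolution (f g : G → ℝ) (x : G) :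
    ‖(f ⋆[ContinuousLinearMap.mul ℝ ℝ, μ] g) x‖ₑ ≤ ((‖f ·‖ₑ) ⋆ₗ[μ] (‖g ·‖ₑ)) x := by
  rw [convolution_def, lconvolution_def]
  refine (enorm_integral_le_lintegral_enorm _).trans (lintegral_mono fun y => ?_)
  simp [neg_add_eq_sub, enorm_mul]

variable [MeasurableAdd₂ G] [MeasurableNeg G] [μ.IsAddLeftInvariant]

theorem AEMeasurable.comp_neg_add [μ.IsNegInvariant] {β : Type*} [MeasurableSpace β] {g : G → β}
    (hg : AEMeasurable g μ) (x : G) : AEMeasurable (fun y => g (-y + x)) μ := by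
  simp_rw [neg_add_eq_sub]
  exact hg.comp_quasiMeasurePreserving
    (Measure.measurePreserving_sub_left μ x).quasiMeasurePreserving

theorem lconvolution_add [μ.IsNegInvariant] {f g₁ g₂ : G → ℝ≥0∞} (hf : AEMeasurable f μ)
    (hg₁ : AEMeasurable g₁ μ) : f ⋆ₗ[μ] (g₁ + g₂) = f ⋆ₗ[μ] g₁ + f ⋆ₗ[μ] g₂ := by
  ext x
  simp only [lconvolution_def, Pi.add_apply, mul_add]
  exact lintegral_add_left' (hf.mul (hg₁.comp_neg_add x)) _

variable [SFinite μ]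

theorem lintegral_lconvolution {f g : G → ℝ≥0∞} (hf : AEMeasurable f μ) (hg : AEMeasurable g μ) :
    ∫⁻ x, (f ⋆ₗ[μ] g) x ∂μ = (∫⁻ x, f x ∂μ) * ∫⁻ x, g x ∂μ := by
  have hg_translate (y : G) : AEMeasurable (fun x => g (-y + x)) μ :=
    hg.comp_quasiMeasurePreserving (measurePreserving_add_left μ (-y)).quasiMeasurePreserving
  simp only [lconvolution_def]
  rw [lintegral_lintegral_swap (by fun_prop)]
  simp_rw [lintegral_const_mul'' _ (hg_translate _), lintegral_add_left_eq_self]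
  exact lintegral_mul_const'' _ hf

variable [μ.IsNegInvariant]

theorem lintegral_lconvolution_rpow_le {f g : G → ℝ≥0∞} (hf : AEMeasurable f μ)
    (hg : AEMeasurable g μ) {p q r : ℝ} (hp : 0 < p) (hq : 1 ≤ q) (hr : 1 ≤ r)
    (hpqr : q⁻¹ + r⁻¹ = 1 + p⁻¹) :
    ∫⁻ x, (f ⋆ₗ[μ] g) x ^ p ∂μ ≤ (∫⁻ x, f x ^ q ∂μ) ^ (p / q) * (∫⁻ x, g x ^ r ∂μ) ^ (p / r) := by
  have hq0 : 0 < q := by linarith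
  have hr0 : 0 < r := by linarith
  set X := ∫⁻ x, f x ^ q ∂μ
  set Y := ∫⁻ x, g x ^ r ∂μ
  have pointwise (x : G) : (f ⋆ₗ[μ] g) x ^ p ≤
      ((fun y => f y ^ q) ⋆ₗ[μ] fun y => g y ^ r) x * X ^ (p / q - 1) * Y ^ (p / r - 1) := by
    have hY : ∫⁻ y, g (-y + x) ^ r ∂μ = Y := by
      simp_rw [neg_add_eq_sub]
      exact lintegral_sub_left_eq_self (fun z => g z ^ r) x
    rw [← hY]
    exact lintegral_mul_rpow_le_of_young_exponents hf (hg.comp_neg_add x) hp hq hr hpqr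
  have hpq : 0 ≤ p / q - 1 := by
    rw [sub_nonneg, one_le_div hq0, ← inv_le_inv₀ hp hq0]
    linarith [inv_le_one_of_one_le₀ hr]
  have hpr : 0 ≤ p / r - 1 := by
    rw [sub_nonneg, one_le_div hr0, ← inv_le_inv₀ hp hr0]
    linarith [inv_le_one_of_one_le₀ hq]
  calc ∫⁻ x, (f ⋆ₗ[μ] g) x ^ p ∂μ
      ≤ ∫⁻ x, ((fun y => f y ^ q) ⋆ₗ[μ] fun y => g y ^ r) x * X ^ (p / q - 1) *
          Y ^ (p / r - 1) ∂μ :=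
        lintegral_mono pointwise
    _ = X * Y * X ^ (p / q - 1) * Y ^ (p / r - 1) := by
      rw [lintegral_mul_const'' _ (by fun_prop), lintegral_mul_const'' _ (by fun_prop),
        lintegral_lconvolution (by fun_prop) (by fun_prop)]
    _ = X ^ (p / q) * Y ^ (p / r) := by
      rw [← add_sub_cancel (1 : ℝ) (p / q), ← add_sub_cancel (1 : ℝ) (p / r),
        ENNReal.rpow_add_of_nonneg _ _ zero_le_one hpq,
        ENNReal.rpow_add_of_nonneg _ _ zero_le_one hpr]
      simp only [add_sub_cancel_left, ENNReal.rpow_one]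
      ring

theorem eLpNorm_lconvolution_le {f g : G → ℝ≥0∞} (hf : AEMeasurable f μ)
    (hg : AEMeasurable g μ) {p q r : ℝ} (hp : 0 < p) (hq : 1 ≤ q) (hr : 1 ≤ r)
    (hpqr : q⁻¹ + r⁻¹ = 1 + p⁻¹) :
    eLpNorm (f ⋆ₗ[μ] g) (.ofReal p) μ ≤ eLpNorm f (.ofReal q) μ * eLpNorm g (.ofReal r) μ := by
  have hq0 : 0 < q := by linarith
  have hr0 : 0 < r := by linarith
  simp only [eLpNorm_eq_lintegral_rpow_enorm_toReal (ENNReal.ofReal_pos.2 hp).ne'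
    ENNReal.ofReal_ne_top, eLpNorm_eq_lintegral_rpow_enorm_toReal (ENNReal.ofReal_pos.2 hq0).ne'
    ENNReal.ofReal_ne_top, eLpNorm_eq_lintegral_rpow_enorm_toReal (ENNReal.ofReal_pos.2 hr0).ne'
    ENNReal.ofReal_ne_top, ENNReal.toReal_ofReal hp.le, ENNReal.toReal_ofReal hq0.le,
    ENNReal.toReal_ofReal hr0.le, enorm_eq_self]
  calc (∫⁻ x, (f ⋆ₗ[μ] g) x ^ p ∂μ) ^ (1 / p)
      ≤ ((∫⁻ x, f x ^ q ∂μ) ^ (p / q) * (∫⁻ x, g x ^ r ∂μ) ^ (p / r)) ^ (1 / p) := by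
        gcongr
        exact lintegral_lconvolution_rpow_le hf hg hp hq hr hpqr
    _ = (∫⁻ x, f x ^ q ∂μ) ^ (1 / q) * (∫⁻ x, g x ^ r ∂μ) ^ (1 / r) := by
      rw [ENNReal.mul_rpow_of_nonneg _ _ (by positivity), ← ENNReal.rpow_mul, ← ENNReal.rpow_mul]
      congr 2 <;> field_simp

theorem eLpNorm_convolution_le_of_enorm_le_add {f g g₁ g₂ : G → ℝ} (hf : AEStronglyMeasurable f μ)
    (hg₁ : AEStronglyMeasurable g₁ μ) (hg₂ : AEStronglyMeasurable g₂ μ)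
    (hg : ∀ y, ‖g y‖ₑ ≤ ‖g₁ y‖ₑ + ‖g₂ y‖ₑ) {p q₁ r₁ q₂ r₂ : ℝ} (hp : 1 ≤ p)
    (hq₁ : 1 ≤ q₁) (hr₁ : 1 ≤ r₁) (hpqr₁ : q₁⁻¹ + r₁⁻¹ = 1 + p⁻¹)
    (hq₂ : 1 ≤ q₂) (hr₂ : 1 ≤ r₂) (hpqr₂ : q₂⁻¹ + r₂⁻¹ = 1 + p⁻¹) :
    eLpNorm (f ⋆[ContinuousLinearMap.mul ℝ ℝ, μ] g) (.ofReal p) μ ≤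
      eLpNorm f (.ofReal q₁) μ * eLpNorm g₁ (.ofReal r₁) μ +
        eLpNorm f (.ofReal q₂) μ * eLpNorm g₂ (.ofReal r₂) μ := by
  set F : G → ℝ≥0∞ := (‖f ·‖ₑ)
  have hF : AEMeasurable F μ := hf.enorm
  calc eLpNorm (f ⋆[ContinuousLinearMap.mul ℝ ℝ, μ] g) (.ofReal p) μ
      ≤ eLpNorm (F ⋆ₗ[μ] ((‖g₁ ·‖ₑ) + (‖g₂ ·‖ₑ))) (.ofReal p) μ := by
        refine eLpNorm_mono_enorm fun x => (enorm_convolution_le_lconvolution f g x).trans ?_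
        exact lintegral_mono fun y => by gcongr; exact hg _
    _ ≤ eLpNorm (F ⋆ₗ[μ] (‖g₁ ·‖ₑ)) (.ofReal p) μ + eLpNorm (F ⋆ₗ[μ] (‖g₂ ·‖ₑ)) (.ofReal p) μ := by
        rw [lconvolution_add hF hg₁.enorm]
        exact eLpNorm_add_le (aemeasurable_lconvolution hF hg₁.enorm).aestronglyMeasurable
          (aemeasurable_lconvolution hF hg₂.enorm).aestronglyMeasurable (by simpa using hp)
    _ ≤ _ := by
        gcongr
        · simpa only [F, eLpNorm_enorm] using
            eLpNorm_lconvolution_le hF hg₁.enorm (by linarith) hq₁ hr₁ hpqr₁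
        · simpa only [F, eLpNorm_enorm] using
            eLpNorm_lconvolution_le hF hg₂.enorm (by linarith) hq₂ hr₂ hpqr₂

theorem eLpNorm_convolution_comp_sub_mul_mul_le {f : ℝ → ℝ} {K : ℝ≥0} (hf : LipschitzWith K f)
    {C : ℝ} (hC : ∀ s, |f s| ≤ C) {p q : ℝ} (hp : 2 < p) (hpq : p.HolderConjugate q)
    {ω u u' h v : G → ℝ} (hω : AEStronglyMeasurable ω μ) (hu : AEStronglyMeasurable u μ)
    (hu' : AEStronglyMeasurable u' μ) (hh : AEStronglyMeasurable h μ)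
    (hv : AEStronglyMeasurable v μ) {ε : ℝ} (hε : 0 < ε)
    (hclose : eLpNorm (u' - u) (.ofReal p) μ ≤ .ofReal ε) :
    eLpNorm (ω ⋆[ContinuousLinearMap.mul ℝ ℝ, μ] fun y => (f (u' y) - f (u y)) * h y * v y)
        (.ofReal p) μ ≤
      (K * eLpNorm ω (.ofReal q) μ * .ofReal √ε +
          ‖2 * C‖ₑ * eLpNorm ω (.ofReal p) μ * .ofReal (√ε ^ (p - 2))) *
        (eLpNorm h (.ofReal p) μ * eLpNorm v (.ofReal p) μ) := by
  have hp0 : 0 < p := by linarith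
  set E := {y | √ε < |(u' - u) y|}
  have hE : NullMeasurableSet E μ :=
    (hu'.sub hu).aemeasurable.nullMeasurable (measurableSet_lt measurable_const measurable_abs)
  have hconv := eLpNorm_convolution_le_of_enorm_le_add hω ((hh.mul hv).const_smul _)
    ((aestronglyMeasurable_const.indicator₀ hE).mul (hh.mul hv))
    (fun y => by simpa only [mul_assoc, Pi.mul_apply] using
      hf.enorm_comp_sub_mul_le hC (Real.sqrt_nonneg ε) u u' (h * v) y)
    (g := fun y => (f (u' y) - f (u y)) * h y * v y) (p := p) (r₁ := p / 2) (q₂ := p) (r₂ := 1)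
    (by linarith) hpq.symm.lt.le (by linarith)
    (by rw [← hpq.one_sub_inv, inv_div, div_eq_mul_inv]; ring) (by linarith) le_rfl
    (by rw [inv_one, add_comm])
  rw [ENNReal.ofReal_one] at hconv
  have hg₁ : eLpNorm (((K : ℝ) * √ε) • (h * v)) (.ofReal (p / 2)) μ ≤
      K * .ofReal √ε * (eLpNorm h (.ofReal p) μ * eLpNorm v (.ofReal p) μ) := by
    rw [eLpNorm_const_smul, enorm_mul, Real.enorm_eq_ofReal (Real.sqrt_nonneg ε)]
    gcongr
    · simp
    · exact eLpNorm_mul_half_le hh hv hp0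
  have hg₂ := eLpNorm_indicator_const_mul_mul_le hE (2 * C) hh hv hp (Real.sqrt_nonneg ε)
    (measure_sqrt_lt_abs_le (hu'.sub hu) hp0 hε hclose)
  refine hconv.trans (le_of_le_of_eq (add_le_add (mul_le_mul_right hg₁ _)
    (mul_le_mul_right hg₂ _)) ?_)
  ring

end Young

/-- Quantitative continuity of the second Gâteaux derivative of the
neural field drift: for `2 < p < ∞` with conjugate `q`, `f''` bounded by `C₂` and
Lipschitz with constant `K = ‖f⁽³⁾‖_∞`, `ω ∈ Lᵖ ∩ L^q`, if `‖u' - u‖_p ≤ ε` then the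
bilinear operator `B(h,v) = μ ω∗[(f''(u') - f''(u)) h v]` has norm at most
`μ(K‖ω‖_q + 2C₂‖ω‖_p)·max(√ε, (√ε)^{p-2})`. -/
theorem stmt11 {d : ℕ} (p q : ℝ) (hp : 2 < p) (hpq : 1 / p + 1 / q = 1)
    (μ : ℝ) (hμ : 0 < μ)
    (f2 : ℝ → ℝ) (C2 : ℝ) (hf2b : ∀ s, |f2 s| ≤ C2) (K : ℝ≥0) (hf2lip : LipschitzWith K f2)
    (ω : (Fin d → ℝ) → ℝ)
    (hωp : MemLp ω (ENNReal.ofReal p) (volume : Measure (Fin d → ℝ)))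
    (hωq : MemLp ω (ENNReal.ofReal q) (volume : Measure (Fin d → ℝ)))
    (u u' : (Fin d → ℝ) → ℝ)
    (hu : MemLp u (ENNReal.ofReal p) (volume : Measure (Fin d → ℝ)))
    (hu' : MemLp u' (ENNReal.ofReal p) (volume : Measure (Fin d → ℝ)))
    (ε : ℝ) (hε : 0 < ε)
    (hclose : eLpNorm (u' - u) (ENNReal.ofReal p) volume ≤ ENNReal.ofReal ε) :
    ∀ h v : (Fin d → ℝ) → ℝ,
      MemLp h (ENNReal.ofReal p) (volume : Measure (Fin d → ℝ)) →
      MemLp v (ENNReal.ofReal p) (volume : Measure (Fin d → ℝ)) →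
      eLpNorm
        (fun x => μ * (ω ⋆[ContinuousLinearMap.mul ℝ ℝ, volume]
          fun y => (f2 (u' y) - f2 (u y)) * h y * v y) x)
        (ENNReal.ofReal p) volume ≤
      ENNReal.ofReal (μ * ((K : ℝ) * (eLpNorm ω (ENNReal.ofReal q) volume).toReal +
          2 * C2 * (eLpNorm ω (ENNReal.ofReal p) volume).toReal) *
          max (Real.sqrt ε) (Real.sqrt ε ^ (p - 2))) *
        eLpNorm h (ENNReal.ofReal p) volume * eLpNorm v (ENNReal.ofReal p) volume := by
  intro h v hh hv
  have hpq' : p.HolderConjugate q :=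
    Real.holderConjugate_iff.2 ⟨by linarith, by simpa only [one_div] using hpq⟩
  set Nq := eLpNorm ω (.ofReal q) volume
  set Np := eLpNorm ω (.ofReal p) volume
  set Nhv := eLpNorm h (.ofReal p) volume * eLpNorm v (.ofReal p) volume
  set M := max (ENNReal.ofReal √ε) (.ofReal (√ε ^ (p - 2)))
  have hC2 : 0 ≤ C2 := (abs_nonneg _).trans (hf2b 0)
  have hRHS : ENNReal.ofReal (μ * ((K : ℝ) * Nq.toReal + 2 * C2 * Np.toReal) *
      max √ε (√ε ^ (p - 2))) = ‖μ‖ₑ * (K * Nq + ‖2 * C2‖ₑ * Np) * M := by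
    rw [ENNReal.ofReal_mul (by positivity), ENNReal.ofReal_mul hμ.le,
      ENNReal.ofReal_add (by positivity) (by positivity), ENNReal.ofReal_mul K.coe_nonneg,
      ENNReal.ofReal_mul (by positivity), ENNReal.ofReal_toReal hωq.eLpNorm_ne_top,
      ENNReal.ofReal_toReal hωp.eLpNorm_ne_top, ENNReal.ofReal_coe_nnreal, ENNReal.ofReal_max,
      Real.enorm_eq_ofReal hμ.le, Real.enorm_eq_ofReal (by positivity)]
  rw [hRHS, mul_assoc _ _ (eLpNorm v _ _)]
  calc eLpNorm (fun x => μ * _) (.ofReal p) volume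
      = ‖μ‖ₑ * eLpNorm (ω ⋆[ContinuousLinearMap.mul ℝ ℝ, volume]
          fun y => (f2 (u' y) - f2 (u y)) * h y * v y) (.ofReal p) volume :=
        eLpNorm_const_smul μ _ _ _
    _ ≤ ‖μ‖ₑ * ((K * Nq) * .ofReal √ε + (‖2 * C2‖ₑ * Np) * .ofReal (√ε ^ (p - 2))) * Nhv := by
        rw [mul_assoc]
        gcongr
        exact eLpNorm_convolution_comp_sub_mul_mul_le hf2lip hf2b hp hpq' hωp.1 hu.1 hu'.1 hh.1
          hv.1 hε hclose
    _ ≤ ‖μ‖ₑ * ((K * Nq) * M + (‖2 * C2‖ₑ * Np) * M) * Nhv := by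
        gcongr
        exacts [le_max_left _ _, le_max_right _ _]
    _ = _ := by ring
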